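/- arXiv:2101.03096 — 2 statements merged into one kernel-verified Lean document; each statement's English description precedes it below -/
import Mathlib

section
/- Fix T > 0, λ > 0, and z₀ ∈ [0, exp(1 - 2e^{λT})]. If z : [0,T] → [0,∞) is the unique solution of z_t = z₀ + λ ∫₀ᵗ γ(z_s) ds, then for every t ∈ [0,T] one has z_t ≤ e · z₀^{exp(-λ t)}. -/
/-!
Once `γ ∘ z` is integrable, `z` is continuous and solves `z' = λ γ(z)` from the right, so it stays
below every strict supersolution. The barriers `W(t) = exp (A - B e^{-λt})` have
`W' = λ B e^{-λt} W` and `-log W = B e^{-λt} - A`, so `λ γ(W) < W'` as soon as `A > 1` and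
`B e^{-λt} > 2`. Taking `A = 1 + ε` and `B = 1 + ε - log η` with `η ↓ z₀` gives the bound in the
limit `ε → 0`.

Integrability of `γ ∘ z` comes out of the same barriers: on the initial segment where it holds,
`z` is monotone and bounded by a barrier, and beyond it the integral takes the junk value `0`, so
`z = z₀` there.
-/

/-- The concave Osgood modulus `γ`: `γ(r) = r(1 - log r)` for `0 < r < 1/e`,
`γ(r) = r + 1/e` for `r ≥ 1/e`, and `γ(0) = 0` (extended by `0` for `r ≤ 0`). -/
noncomputable def gam (r : ℝ) : ℝ :=
  if r ≤ 0 then 0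
  else if r < (Real.exp 1)⁻¹ then r * (1 - Real.log r)
  else r + (Real.exp 1)⁻¹

open Real MeasureTheory Set intervalIntegral Filter Topology

lemma gam_nonneg (r : ℝ) : 0 ≤ gam r := by
  unfold gam
  split_ifs with hr₀ hr
  · rfl
  · have : log r < -1 := by
      rw [log_lt_iff_lt_exp (not_le.1 hr₀), exp_neg]
      exact hr
    nlinarith
  · have := not_le.1 hr₀
    positivity

lemma continuous_gam : Continuous gam := by
  have hgam : gam = fun r ↦ if r ≤ 0 then 0 else if (exp 1)⁻¹ ≤ r then r + (exp 1)⁻¹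
      else r - r * log r := by
    funext r
    simp only [gam, ← not_lt, ite_not]
    split_ifs <;> ring
  rw [hgam]
  refine continuous_const.if_le (Continuous.if_le (by fun_prop)
    (continuous_id.sub continuous_mul_log) continuous_const continuous_id ?_)
    continuous_id continuous_const ?_
  · intro r hr
    rw [← hr, log_inv, log_exp]
    ring
  · intro r hr
    subst hr
    have : ¬ (exp 1)⁻¹ ≤ 0 := not_le.2 (by positivity)
    simp [this]

lemma gam_lt_mul_self {r K : ℝ} (hr : 0 < r) (hK : 2 < K) (hlog : 1 - log r < K) :
    gam r < K * r := by
  unfold gam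
  split_ifs with hr₀ hr'
  · exact absurd hr₀ hr.not_ge
  · rw [mul_comm K]
    exact mul_lt_mul_of_pos_left hlog hr
  · nlinarith

section IntegralEquation

variable {F z : ℝ → ℝ} {z₀ a b : ℝ}

lemma continuousOn_of_integral_eq (hint : IntervalIntegrable (fun s ↦ F (z s)) volume a b)
    (hz : ∀ t ∈ Icc a b, z t = z₀ + ∫ s in a..t, F (z s)) : ContinuousOn z (Icc a b) := by
  have hprim := continuousOn_primitive_interval' hint left_mem_uIcc
  exact (continuousOn_const.add (hprim.mono Icc_subset_uIcc)).congr hz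

lemma hasDerivWithinAt_Ici_of_integral_eq (hF : Continuous F)
    (hint : IntervalIntegrable (fun s ↦ F (z s)) volume a b)
    (hz : ∀ t ∈ Icc a b, z t = z₀ + ∫ s in a..t, F (z s)) {x : ℝ} (hx : x ∈ Ico a b) :
    HasDerivWithinAt z (F (z x)) (Ici x) x := by
  have hFz : ContinuousOn (fun s ↦ F (z s)) (Icc a b) :=
    hF.comp_continuousOn (continuousOn_of_integral_eq hint hz)
  have hnhds : 𝓝[>] x ≤ 𝓝[Icc a b] x := nhdsWithin_le_of_mem (Icc_mem_nhdsGT_of_mem hx)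
  have hprim : HasDerivWithinAt (fun t ↦ ∫ s in a..t, F (z s)) (F (z x)) (Ici x) x :=
    integral_hasDerivWithinAt_right
      (hint.mono_set (uIcc_subset_uIcc_left (Ico_subset_Icc_self.trans Icc_subset_uIcc hx)))
      ((hFz.stronglyMeasurableAtFilter_nhdsWithin measurableSet_Icc x).filter_mono hnhds)
      ((hFz x (Ico_subset_Icc_self hx)).mono_left hnhds)
  exact (hprim.const_add z₀).congr_of_eventuallyEq
    (eventually_of_mem (Icc_mem_nhdsGE_of_mem hx) hz) (hz x (Ico_subset_Icc_self hx))

theorem le_of_integral_eq_of_supersolution (hF : Continuous F)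
    (hint : IntervalIntegrable (fun s ↦ F (z s)) volume a b)
    (hz : ∀ t ∈ Icc a b, z t = z₀ + ∫ s in a..t, F (z s)) {W W' : ℝ → ℝ}
    (hW : ContinuousOn W (Icc a b)) (hW' : ∀ x ∈ Ico a b, HasDerivWithinAt W (W' x) (Ici x) x)
    (h₀ : z₀ ≤ W a) (hsuper : ∀ x ∈ Ico a b, z x = W x → F (z x) < W' x) :
    ∀ t ∈ Icc a b, z t ≤ W t := by
  intro t ht
  have hza : z a = z₀ := by simpa using hz a (left_mem_Icc.2 (ht.1.trans ht.2))
  exact image_le_of_deriv_right_lt_deriv_boundary' (continuousOn_of_integral_eq hint hz)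
    (fun x hx ↦ hasDerivWithinAt_Ici_of_integral_eq hF hint hz hx) (hza ▸ h₀) hW hW' hsuper ht

theorem intervalIntegrable_of_integral_eq (hF : Continuous F) (hF₀ : ∀ r, 0 ≤ F r) (hab : a ≤ b)
    (hz : ∀ t ∈ Icc a b, z t = z₀ + ∫ s in a..t, F (z s)) {M : ℝ}
    (hM : ∀ t ∈ Icc a b, IntervalIntegrable (fun s ↦ F (z s)) volume a t → z t ≤ M) :
    IntervalIntegrable (fun s ↦ F (z s)) volume a b := by
  set I := {t ∈ Icc a b | IntervalIntegrable (fun s ↦ F (z s)) volume a t}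
  have hI : I.OrdConnected := ⟨fun x hx y hy u hu ↦ ⟨⟨hx.1.1.trans hu.1, hu.2.trans hy.1.2⟩,
    hy.2.mono_set (uIcc_subset_uIcc_left (Icc_subset_uIcc ⟨hx.1.1.trans hu.1, hu.2⟩))⟩⟩
  have hlower : ∀ t ∈ I, z₀ ≤ z t := fun t ht ↦ by
    rw [hz t ht.1]
    linarith [integral_nonneg (μ := volume) ht.1.1 fun u _ ↦ hF₀ (z u)]
  have hmono : MonotoneOn z I := fun s hs t ht hst ↦ by
    have hsub := integral_interval_sub_left ht.2 hs.2
    rw [hz s hs.1, hz t ht.1]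
    linarith [integral_nonneg (μ := volume) hst fun u _ ↦ hF₀ (z u)]
  obtain ⟨C, hC⟩ := isCompact_Icc.exists_bound_of_continuousOn (hF.continuousOn (s := Icc z₀ M))
  have hIntI : IntegrableOn (fun s ↦ F (z s)) I :=
    .of_bound ((measure_mono fun t ht ↦ ht.1).trans_lt measure_Icc_lt_top)
      (hF.measurable.comp_aemeasurable
        (aemeasurable_restrict_of_monotoneOn hI.measurableSet hmono)).aestronglyMeasurable C
      ((ae_restrict_iff' hI.measurableSet).2 <| ae_of_all _ fun t ht ↦
        hC _ ⟨hlower t ht, hM t ht.1 ht.2⟩)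
  have hIntRest : IntegrableOn (fun s ↦ F (z s)) (Icc a b \ I) :=
    (integrableOn_const (C := F z₀)
      ((measure_mono sdiff_subset).trans_lt measure_Icc_lt_top).ne).congr_fun
      (fun t ht ↦ by
        rw [hz t ht.1, integral_undef fun h ↦ ht.2 ⟨ht.1, h⟩, add_zero])
      (measurableSet_Icc.diff hI.measurableSet)
  rw [intervalIntegrable_iff_integrableOn_Icc_of_le hab,
    ← union_sdiff_cancel (sep_subset (Icc a b) _)]
  exact hIntI.union hIntRest

end IntegralEquation

lemma hasDerivAt_exp_sub_mul_exp (A B lam t : ℝ) :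
    HasDerivAt (fun t ↦ exp (A - B * exp (-lam * t)))
      (lam * (B * exp (-lam * t)) * exp (A - B * exp (-lam * t))) t := by
  convert ((((hasDerivAt_id' t).const_mul (-lam)).exp.const_mul B).const_sub A).exp using 1
  ring

theorem le_exp_sub_mul_exp_of_integral_eq_gam {lam a z₀ A B : ℝ} {z : ℝ → ℝ} (hlam : 0 < lam)
    (hint : IntervalIntegrable (fun s ↦ lam * gam (z s)) volume 0 a)
    (hz : ∀ t ∈ Icc 0 a, z t = z₀ + ∫ s in 0..t, lam * gam (z s))
    (hA : 1 < A) (hB : 2 * exp (lam * a) < B) (h₀ : z₀ ≤ exp (A - B)) :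
    ∀ t ∈ Icc 0 a, z t ≤ exp (A - B * exp (-lam * t)) := by
  refine le_of_integral_eq_of_supersolution (F := fun r ↦ lam * gam r)
    (continuous_const.mul continuous_gam) hint hz
    (by fun_prop) (fun x _ ↦ (hasDerivAt_exp_sub_mul_exp A B lam x).hasDerivWithinAt)
    (by simpa using h₀) fun x hx hzx ↦ ?_
  have hK : 2 < B * exp (-lam * x) := by
    have : exp (lam * x) ≤ exp (lam * a) := exp_le_exp.2 (by nlinarith [hx.2])
    rw [neg_mul, exp_neg, ← div_eq_mul_inv, lt_div_iff₀ (exp_pos _)]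
    linarith
  have hgam := gam_lt_mul_self (exp_pos (A - B * exp (-lam * x))) hK (by rw [log_exp]; linarith)
  rw [hzx]
  simpa only [mul_assoc] using mul_lt_mul_of_pos_left hgam hlam

lemma intervalIntegrable_gam_of_integral_eq {lam a z₀ : ℝ} {z : ℝ → ℝ} (hlam : 0 < lam)
    (ha : 0 ≤ a) (hz₀ : z₀ ≤ exp (1 - 2 * exp (lam * a)))
    (hz : ∀ t ∈ Icc 0 a, z t = z₀ + ∫ s in 0..t, lam * gam (z s)) :
    IntervalIntegrable (fun s ↦ lam * gam (z s)) volume 0 a := by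
  refine intervalIntegrable_of_integral_eq (F := fun r ↦ lam * gam r)
    (continuous_const.mul continuous_gam) (fun r ↦ mul_nonneg hlam.le (gam_nonneg r)) ha hz
    (M := exp 2) fun s hs hints ↦ ?_
  have hbarrier := le_exp_sub_mul_exp_of_integral_eq_gam (A := 2) (B := 2 * exp (lam * a) + 1)
    hlam hints (fun u hu ↦ hz u ⟨hu.1, hu.2.trans hs.2⟩) one_lt_two
    (by nlinarith [exp_le_exp.2 (mul_le_mul_of_nonneg_left hs.2 hlam.le)])
    (by rwa [show (2 : ℝ) - (2 * exp (lam * a) + 1) = 1 - 2 * exp (lam * a) by ring])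
    s ⟨hs.1, le_rfl⟩
  exact hbarrier.trans (exp_le_exp.2 (by nlinarith [exp_pos (-lam * s), exp_pos (lam * a)]))

lemma le_exp_mul_rpow_of_integral_eq_gam {lam a z₀ ε : ℝ} {z : ℝ → ℝ} (hlam : 0 < lam)
    (ha : 0 ≤ a) (hz₀ : z₀ ∈ Icc 0 (exp (1 - 2 * exp (lam * a))))
    (hz : ∀ t ∈ Icc 0 a, z t = z₀ + ∫ s in 0..t, lam * gam (z s)) (hε : 0 < ε) :
    z a ≤ exp (1 + ε) * (z₀ + exp (1 - 2 * exp (lam * a)) * ε / 2) ^ exp (-lam * a) := by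
  set c := exp (1 - 2 * exp (lam * a)) with hc_def
  set η := z₀ + c * ε / 2 with hη_def
  have hc : 0 < c := exp_pos _
  have hcε : 0 < c * ε := mul_pos hc hε
  have hη : 0 < η := by linarith [hz₀.1]
  have hlogη : log η < 1 + ε - 2 * exp (lam * a) := by
    rw [log_lt_iff_lt_exp hη, sub_eq_add_neg, add_right_comm, ← sub_eq_add_neg, exp_add, ← hc_def]
    nlinarith [mul_le_mul_of_nonneg_left (add_one_le_exp ε) hc.le, hz₀.2]
  calc z a ≤ exp (1 + ε - (1 + ε - log η) * exp (-lam * a)) :=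
        le_exp_sub_mul_exp_of_integral_eq_gam hlam
          (intervalIntegrable_gam_of_integral_eq hlam ha hz₀.2 hz) hz (by linarith)
          (by linarith) (by rw [sub_sub_cancel, exp_log hη]; linarith) a ⟨ha, le_rfl⟩
    _ ≤ exp (1 + ε + log η * exp (-lam * a)) := exp_le_exp.2 (by nlinarith [exp_pos (-lam * a)])
    _ = exp (1 + ε) * η ^ exp (-lam * a) := by rw [exp_add, rpow_def_of_pos hη]

theorem osgood_comparison_general (T lam z₀ : ℝ) (hlam : 0 < lam)
    (hz₀ : z₀ ∈ Set.Icc 0 (Real.exp (1 - 2 * Real.exp (lam * T))))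
    (z : ℝ → ℝ)
    (hz : ∀ t ∈ Set.Icc 0 T, z t = z₀ + lam * ∫ s in (0 : ℝ)..t, gam (z s)) :
    ∀ t ∈ Set.Icc 0 T, z t ≤ Real.exp 1 * z₀ ^ Real.exp (-lam * t) := by
  intro t ht
  have hz₀t : z₀ ∈ Icc 0 (exp (1 - 2 * exp (lam * t))) :=
    ⟨hz₀.1, hz₀.2.trans (exp_le_exp.2 (by gcongr; exact ht.2))⟩
  have hzt : ∀ s ∈ Icc 0 t, z s = z₀ + ∫ u in 0..s, lam * gam (z u) := fun s hs ↦ by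
    rw [intervalIntegral.integral_const_mul]
    exact hz s ⟨hs.1, hs.2.trans ht.2⟩
  have hcont : Continuous fun ε ↦
      exp (1 + ε) * (z₀ + exp (1 - 2 * exp (lam * t)) * ε / 2) ^ exp (-lam * t) := by
    fun_prop (disch := exact (exp_pos _).le)
  refine ge_of_tendsto (x := 𝓝[>] (0 : ℝ)) ?_ (eventually_nhdsWithin_of_forall
    fun ε hε ↦ le_exp_mul_rpow_of_integral_eq_gam hlam ht.1 hz₀t hzt hε)
  simpa using (hcont.tendsto 0).mono_left nhdsWithin_le_nhds

/-- If `z : [0,T] → [0,∞)` solves `z_t = z₀ + λ ∫₀ᵗ γ(z_s) ds` with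
`z₀ ∈ [0, exp(1 - 2 e^{λT})]`, then `z_t ≤ e ⬝ z₀ ^ (exp (-λ t))` on `[0,T]`. -/
theorem osgood_comparison (T lam z₀ : ℝ) (hT : 0 < T) (hlam : 0 < lam)
    (hz₀ : z₀ ∈ Set.Icc 0 (Real.exp (1 - 2 * Real.exp (lam * T))))
    (z : ℝ → ℝ) (hznn : ∀ t ∈ Set.Icc 0 T, 0 ≤ z t)
    (hz : ∀ t ∈ Set.Icc 0 T, z t = z₀ + lam * ∫ s in (0 : ℝ)..t, gam (z s)) :
    ∀ t ∈ Set.Icc 0 T, z t ≤ Real.exp 1 * z₀ ^ Real.exp (-lam * t) :=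
  osgood_comparison_general T lam z₀ hlam hz₀ z hz
end

section
/- With notation as above (h = k case), E[c | F_a] - δ/2 is bounded in absolute value by (ε⁴/2)|η^{ε,k}_a|² (1 - e^{-ε^{-2}δ})² + (3/2)ε² + ε² e^{-ε^{-2}δ}(2 + e^{-ε^{-2}δ})/2; in particular if δ = δ_ε with δ_ε/ε² → ∞ as ε → 0, then E[|E[c | F_a] - δ_ε/2|] ≤ C ε² for small ε. -/
/-!
With `e = exp(-δ/ε²)`, `E[c | F_a] - δ/2` splits as `ε⁴x²(1 - e)²/2 + ε²(e - 3/4 - e²/4)`, so the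
triangle inequality gives the pointwise bound for every `δ`. Integrating it against
`E[x²] = ε⁻²/2` leaves `ε²((1 - e)²/4 + 3/2 + e(2 + e)/2)`, which is at most `13/4 ε²` as soon as
`δ ≥ 0`, i.e. `e ≤ 1`; `δ/ε² → ∞` guarantees this for small `ε`.
-/

open MeasureTheory Filter

/-- The value of the conditional expectation `E[c | F_a]` of the iterated
Ornstein–Uhlenbeck integral (diagonal case `h = k`), as a function of `ε`, the time
step `d` and the value `x = η^{ε,k}_a`. -/
noncomputable def ouCondExpVal (ε d x : ℝ) : ℝ :=
  ε ^ 4 / 2 * x ^ 2 * (Real.exp (-(ε ^ 2)⁻¹ * d) - 1) ^ 2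
    + 1 / 2 * (d + ε ^ 2 * (-(3 / 2) + 2 * Real.exp (-(ε ^ 2)⁻¹ * d)
        - 1 / 2 * Real.exp (-2 * (ε ^ 2)⁻¹ * d)))

theorem ouCondExpVal_sub_half (ε d x : ℝ) :
    ouCondExpVal ε d x - d / 2
      = ε ^ 4 / 2 * x ^ 2 * (1 - Real.exp (-(ε ^ 2)⁻¹ * d)) ^ 2
        + ε ^ 2 * (Real.exp (-(ε ^ 2)⁻¹ * d) - 3 / 4 - Real.exp (-(ε ^ 2)⁻¹ * d) ^ 2 / 4) := by
  have hexp_sq : Real.exp (-2 * (ε ^ 2)⁻¹ * d) = Real.exp (-(ε ^ 2)⁻¹ * d) ^ 2 := by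
    rw [← Real.exp_nat_mul]
    ring_nf
  rw [ouCondExpVal, hexp_sq]
  ring

theorem abs_ouCondExpVal_sub_half_le (ε d x : ℝ) :
    |ouCondExpVal ε d x - d / 2|
      ≤ ε ^ 4 / 2 * x ^ 2 * (1 - Real.exp (-(ε ^ 2)⁻¹ * d)) ^ 2
        + 3 / 2 * ε ^ 2
        + ε ^ 2 * Real.exp (-(ε ^ 2)⁻¹ * d) * (2 + Real.exp (-(ε ^ 2)⁻¹ * d)) / 2 := by
  rw [ouCondExpVal_sub_half]
  set e := Real.exp (-(ε ^ 2)⁻¹ * d)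
  have he : 0 < e := Real.exp_pos _
  have hconst : |e - 3 / 4 - e ^ 2 / 4| ≤ 3 / 2 + e * (2 + e) / 2 := by
    rw [abs_le]
    constructor <;> nlinarith
  calc _ ≤ |ε ^ 4 / 2 * x ^ 2 * (1 - e) ^ 2| + |ε ^ 2 * (e - 3 / 4 - e ^ 2 / 4)| :=
        abs_add_le _ _
    _ = ε ^ 4 / 2 * x ^ 2 * (1 - e) ^ 2 + ε ^ 2 * |e - 3 / 4 - e ^ 2 / 4| := by
        rw [abs_of_nonneg (by positivity), abs_mul, abs_of_nonneg (sq_nonneg ε)]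
    _ ≤ ε ^ 4 / 2 * x ^ 2 * (1 - e) ^ 2 + ε ^ 2 * (3 / 2 + e * (2 + e) / 2) := by
        gcongr
    _ = _ := by ring

theorem integral_abs_ouCondExpVal_sub_half_le {Ω : Type*} [MeasurableSpace Ω] {μ : Measure Ω}
    [IsProbabilityMeasure μ] {X : Ω → ℝ} {ε d : ℝ} (hε : ε ≠ 0) (hd : 0 ≤ d)
    (hX2 : ∫ ω, X ω ^ 2 ∂μ = (ε ^ 2)⁻¹ / 2) :
    ∫ ω, |ouCondExpVal ε d (X ω) - d / 2| ∂μ ≤ 13 / 4 * ε ^ 2 := by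
  set e := Real.exp (-(ε ^ 2)⁻¹ * d)
  have he_pos : 0 < e := Real.exp_pos _
  have he_le_one : e ≤ 1 := Real.exp_le_one_iff.mpr (by
    have : 0 ≤ (ε ^ 2)⁻¹ * d := by positivity
    linarith)
  set a := ε ^ 4 / 2 * (1 - e) ^ 2
  set b := 3 / 2 * ε ^ 2 + ε ^ 2 * e * (2 + e) / 2
  have hX2_int : Integrable (fun ω => X ω ^ 2) μ :=
    Integrable.of_integral_ne_zero (by rw [hX2]; positivity)
  have hdom_int : Integrable (fun ω => a * X ω ^ 2 + b) μ :=
    (hX2_int.const_mul a).add (integrable_const b)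
  calc ∫ ω, |ouCondExpVal ε d (X ω) - d / 2| ∂μ
      ≤ ∫ ω, (a * X ω ^ 2 + b) ∂μ := by
        exact integral_mono_of_nonneg (.of_forall fun _ => abs_nonneg _) hdom_int
          (.of_forall fun ω => (abs_ouCondExpVal_sub_half_le ε d (X ω)).trans_eq (by ring))
    _ = a * ((ε ^ 2)⁻¹ / 2) + b := by
        rw [integral_add (hX2_int.const_mul a) (integrable_const b), integral_const_mul, hX2,
          integral_const, probReal_univ, one_smul]
    _ = ε ^ 2 * ((1 - e) ^ 2 / 4 + 3 / 2 + e * (2 + e) / 2) := by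
        field_simp
        ring
    _ ≤ ε ^ 2 * (13 / 4) := by
        gcongr
        nlinarith
    _ = 13 / 4 * ε ^ 2 := mul_comm _ _

theorem ou_condexp_error_bound_general {Ω : Type*} [MeasurableSpace Ω] (μ : Measure Ω)
    [IsProbabilityMeasure μ] (X : ℝ → Ω → ℝ) (δ : ℝ → ℝ)
    (hX2 : ∀ ε, 0 < ε → ∫ ω, (X ε ω) ^ 2 ∂μ = (ε ^ 2)⁻¹ / 2)
    (hδε : Tendsto (fun ε => δ ε / ε ^ 2) (nhdsWithin 0 (Set.Ioi 0)) atTop) :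
    (∀ ε, 0 < ε → ∀ ω,
      |ouCondExpVal ε (δ ε) (X ε ω) - δ ε / 2|
        ≤ ε ^ 4 / 2 * (X ε ω) ^ 2 * (1 - Real.exp (-(ε ^ 2)⁻¹ * δ ε)) ^ 2
          + 3 / 2 * ε ^ 2
          + ε ^ 2 * Real.exp (-(ε ^ 2)⁻¹ * δ ε) * (2 + Real.exp (-(ε ^ 2)⁻¹ * δ ε)) / 2) ∧
      ∃ C > 0, ∀ᶠ ε in nhdsWithin 0 (Set.Ioi 0),
        ∫ ω, |ouCondExpVal ε (δ ε) (X ε ω) - δ ε / 2| ∂μ ≤ C * ε ^ 2 := by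
  refine ⟨fun ε _ ω => abs_ouCondExpVal_sub_half_le ε (δ ε) (X ε ω), 13 / 4, by norm_num, ?_⟩
  filter_upwards [self_mem_nhdsWithin, hδε.eventually (eventually_ge_atTop 0)]
    with ε (hε : 0 < ε) hδ
  have hδ_nonneg : 0 ≤ δ ε := by
    simpa [div_mul_cancel₀, hε.ne'] using mul_nonneg hδ (sq_nonneg ε)
  exact integral_abs_ouCondExpVal_sub_half_le hε.ne' hδ_nonneg (hX2 ε hε)

/-- In the diagonal case, `E[c | F_a] - δ/2` is pointwise bounded by
`(ε⁴/2)|η^{ε,k}_a|²(1 - e^{-ε⁻²δ})² + (3/2)ε² + ε² e^{-ε⁻²δ}(2 + e^{-ε⁻²δ})/2`;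
in particular, if `δ_ε/ε² → ∞` as `ε → 0` and `E[|η^{ε,k}_a|²] = ε⁻²/2`, then
`E[|E[c | F_a] - δ_ε/2|] ≤ C ε²` for small `ε`. -/
theorem ou_condexp_error_bound {Ω : Type*} [MeasurableSpace Ω] (μ : Measure Ω)
    [IsProbabilityMeasure μ] (X : ℝ → Ω → ℝ) (δ : ℝ → ℝ)
    (hmeas : ∀ ε, Measurable (X ε))
    (hX2 : ∀ ε, 0 < ε → ∫ ω, (X ε ω) ^ 2 ∂μ = (ε ^ 2)⁻¹ / 2)
    (hδpos : ∀ ε, 0 < ε → 0 < δ ε)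
    (hδε : Tendsto (fun ε => δ ε / ε ^ 2) (nhdsWithin 0 (Set.Ioi 0)) atTop) :
    (∀ ε, 0 < ε → ∀ ω,
      |ouCondExpVal ε (δ ε) (X ε ω) - δ ε / 2|
        ≤ ε ^ 4 / 2 * (X ε ω) ^ 2 * (1 - Real.exp (-(ε ^ 2)⁻¹ * δ ε)) ^ 2
          + 3 / 2 * ε ^ 2
          + ε ^ 2 * Real.exp (-(ε ^ 2)⁻¹ * δ ε) * (2 + Real.exp (-(ε ^ 2)⁻¹ * δ ε)) / 2) ∧
      ∃ C > 0, ∀ᶠ ε in nhdsWithin 0 (Set.Ioi 0),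
        ∫ ω, |ouCondExpVal ε (δ ε) (X ε ω) - δ ε / 2| ∂μ ≤ C * ε ^ 2 :=
  ou_condexp_error_bound_general μ X δ hX2 hδε
end
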